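/- arXiv:0704.3427 — 6 statements merged into one kernel-verified Lean document; each statement's English description precedes it below -/
import Mathlib

section
/- Let (q₁,p₁,q₂,p₂) be a holomorphic solution of system (1) on a domain D with data (η; α₀,α₁,α₂,α₃,α₄,α₅), and suppose p₂ is nowhere zero on D. Then the quadruple (q₁, p₁, q₂ + α₅/p₂, p₂), regarded as holomorphic functions of the same variables (t,s), is a holomorphic solution of system (1) on D with the same η and with parameters (α₀+α₅, α₁+α₅, α₂, α₃+α₅, α₄+α₅, −α₅). (Bäcklund transformation s₂.) -/
/-!
The map `(q₁, p₁, q₂, p₂) ↦ (q₁, p₁, q₂ + α₅ / p₂, p₂)` is symplectic, because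
`d(α₅ / p₂) ∧ dp₂ = 0`. A direct computation shows that for each of `H₁` and `H₂` the
Hamiltonian with the new parameters, composed with this map, differs from the old Hamiltonian by
a function of `(t, s)` alone. Hamilton's equations are therefore carried over by the chain rule.
-/

noncomputable section

/-- The Painlevé VI Hamiltonian `H_VI(q,p,t;β₁,β₂,β₃,β₄)` (with fixed `η`). -/
def Hvi (eta b1 b2 b3 b4 q p t : ℂ) : ℂ :=
  (q*(q-1)*(q-eta)*(q-t)*p^2
    + (b1*(t-eta)*q*(q-1) + 2*b2*q*(q-1)*(q-eta) + b3*(t-1)*q*(q-eta)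
        + b4*t*(q-1)*(q-eta))*p
    + b2*((b1+b2)*(t-eta) + b2*(q-1) + b3*(t-1) + t*b4)*q)
  / (t*(t-1)*(t-eta))

/-- The first Hamiltonian `H₁` of system (1). -/
def H1 (eta a1 a2 a3 a4 a5 q1 p1 q2 p2 t s : ℂ) : ℂ :=
  Hvi eta a1 a2 a3 a4 q1 p1 t
  + a2*p2*((-(t-1)*s*q1 + t*(s-1)*q2 + (t-s)*q1*q2)/(t*(t-1)*(t-s))
      + (q1-t)*q2*(q2-1)/(t*(t-1)*(t-eta)))
  + a5*p1*(((t-s)*q1*(q1-1) + t*(t-1)*(q1-q2))/(t*(t-1)*(t-s))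
      + (q1-t)*((t-1)*q1+(q1-t)*q2)/(t*(t-1)*(t-eta)))
  - p1*p2*(((t-1)*(s*q1^2+t*q2^2) - (t-s)*q2*(q1^2+t) - 2*t*(s-1)*q1*q2)/(t*(t-1)*(t-s))
      - (q1-t)^2*q2*(q2-1)/(t*(t-1)*(t-eta)))
  + a2*a5*(2*t*q1 - q1 - t*q2 + q1*q2 - eta*q1)/(t*(t-1)*(t-eta))

/-- The second Hamiltonian `H₂ = π(H₁)` of system (1). -/
def H2 (eta a1 a2 a3 a4 a5 q1 p1 q2 p2 t s : ℂ) : ℂ :=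
  H1 eta a1 a5 a3 a4 a2 q2 p2 q1 p1 s t

/-- Admissible independent variables: `t, s ∉ {0, 1, η}` and `t ≠ s`. -/
def Adm (eta t s : ℂ) : Prop :=
  t ≠ 0 ∧ t ≠ 1 ∧ t ≠ eta ∧ s ≠ 0 ∧ s ≠ 1 ∧ s ≠ eta ∧ t ≠ s

/-- `(q₁,p₁,q₂,p₂)` is a holomorphic solution of the Hamiltonian system (1) on the
domain `D` with data `(η; α₀,α₁,α₂,α₃,α₄,α₅)`. -/
def IsSol (eta a0 a1 a2 a3 a4 a5 : ℂ) (D : Set (ℂ × ℂ))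
    (q1 p1 q2 p2 : ℂ × ℂ → ℂ) : Prop :=
  IsOpen D ∧
  (∀ x ∈ D, Adm eta x.1 x.2) ∧
  DifferentiableOn ℂ q1 D ∧ DifferentiableOn ℂ p1 D ∧
  DifferentiableOn ℂ q2 D ∧ DifferentiableOn ℂ p2 D ∧
  ∀ x ∈ D,
    deriv (fun u => q1 (u, x.2)) x.1
      = deriv (fun y => H1 eta a1 a2 a3 a4 a5 (q1 x) y (q2 x) (p2 x) x.1 x.2) (p1 x) ∧
    deriv (fun u => p1 (u, x.2)) x.1
      = - deriv (fun y => H1 eta a1 a2 a3 a4 a5 y (p1 x) (q2 x) (p2 x) x.1 x.2) (q1 x) ∧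
    deriv (fun u => q2 (u, x.2)) x.1
      = deriv (fun y => H1 eta a1 a2 a3 a4 a5 (q1 x) (p1 x) (q2 x) y x.1 x.2) (p2 x) ∧
    deriv (fun u => p2 (u, x.2)) x.1
      = - deriv (fun y => H1 eta a1 a2 a3 a4 a5 (q1 x) (p1 x) y (p2 x) x.1 x.2) (q2 x) ∧
    deriv (fun u => q1 (x.1, u)) x.2
      = deriv (fun y => H2 eta a1 a2 a3 a4 a5 (q1 x) y (q2 x) (p2 x) x.1 x.2) (p1 x) ∧
    deriv (fun u => p1 (x.1, u)) x.2
      = - deriv (fun y => H2 eta a1 a2 a3 a4 a5 y (p1 x) (q2 x) (p2 x) x.1 x.2) (q1 x) ∧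
    deriv (fun u => q2 (x.1, u)) x.2
      = deriv (fun y => H2 eta a1 a2 a3 a4 a5 (q1 x) (p1 x) (q2 x) y x.1 x.2) (p2 x) ∧
    deriv (fun u => p2 (x.1, u)) x.2
      = - deriv (fun y => H2 eta a1 a2 a3 a4 a5 (q1 x) (p1 x) y (p2 x) x.1 x.2) (q2 x)

section PartialDerivatives

variable {𝕜 E : Type*} [NontriviallyNormedField 𝕜] [NormedAddCommGroup E] [NormedSpace 𝕜 E]

theorem DifferentiableAt.hasDerivAt_comp_prodMk_self {f : 𝕜 × 𝕜 → E} {g : 𝕜 → 𝕜} {g' y : 𝕜}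
    (hf : DifferentiableAt 𝕜 f (g y, y)) (hg : HasDerivAt g g' y) :
    HasDerivAt (fun z => f (g z, z))
      (g' • deriv (fun x => f (x, y)) (g y) + deriv (fun z => f (g y, z)) y) y := by
  have hfst : deriv (fun x => f (x, y)) (g y) = fderiv 𝕜 f (g y, y) (1, 0) :=
    (hf.hasFDerivAt.comp_hasDerivAt (g y) ((hasDerivAt_id _).prodMk (hasDerivAt_const _ y))).deriv
  have hsnd : deriv (fun z => f (g y, z)) y = fderiv 𝕜 f (g y, y) (0, 1) :=
    (hf.hasFDerivAt.comp_hasDerivAt y ((hasDerivAt_const _ (g y)).prodMk (hasDerivAt_id _))).deriv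
  have hcomp : HasDerivAt (fun z => f (g z, z)) (fderiv 𝕜 f (g y, y) (g', 1)) y :=
    hf.hasFDerivAt.comp_hasDerivAt (f := fun z => (g z, z)) y (hg.prodMk (hasDerivAt_id y))
  convert hcomp using 1
  rw [hfst, hsnd, ← map_smul, ← map_add]
  congr 1
  ext <;> simp

theorem DifferentiableAt.comp_prodMk_left {f : 𝕜 × 𝕜 → E} {x : 𝕜 × 𝕜}
    (hf : DifferentiableAt 𝕜 f x) : DifferentiableAt 𝕜 (fun u => f (u, x.2)) x.1 :=
  hf.comp x.1 (differentiableAt_id.prodMk (differentiableAt_const _))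

theorem DifferentiableAt.comp_prodMk_right {f : 𝕜 × 𝕜 → E} {x : 𝕜 × 𝕜}
    (hf : DifferentiableAt 𝕜 f x) : DifferentiableAt 𝕜 (fun u => f (x.1, u)) x.2 :=
  hf.comp x.2 ((differentiableAt_const _).prodMk differentiableAt_id)

end PartialDerivatives

section CanonicalShift

variable {𝕜 : Type*} [NontriviallyNormedField 𝕜] {F G : 𝕜 → 𝕜 → 𝕜 → 𝕜 → 𝕜} {a : 𝕜}
  {q₁ p₁ q₂ p₂ : 𝕜}

def IsShiftedHamiltonian (F G : 𝕜 → 𝕜 → 𝕜 → 𝕜 → 𝕜) (a : 𝕜) : Prop :=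
  ∃ c, ∀ q₁ p₁ q₂ p₂, p₂ ≠ 0 → F q₁ p₁ (q₂ + a / p₂) p₂ = G q₁ p₁ q₂ p₂ + c

theorem deriv_shift_q₁
    (hFG : IsShiftedHamiltonian F G a) (hp₂ : p₂ ≠ 0) :
    deriv (fun y => F y p₁ (q₂ + a / p₂) p₂) q₁ = deriv (fun y => G y p₁ q₂ p₂) q₁ := by
  obtain ⟨c, hc⟩ := hFG
  simp only [hc _ _ _ _ hp₂, deriv_add_const]

theorem deriv_shift_p₁
    (hFG : IsShiftedHamiltonian F G a) (hp₂ : p₂ ≠ 0) :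
    deriv (fun y => F q₁ y (q₂ + a / p₂) p₂) p₁ = deriv (fun y => G q₁ y q₂ p₂) p₁ := by
  obtain ⟨c, hc⟩ := hFG
  simp only [hc _ _ _ _ hp₂, deriv_add_const]

theorem deriv_shift_q₂
    (hFG : IsShiftedHamiltonian F G a) (hp₂ : p₂ ≠ 0) :
    deriv (fun y => F q₁ p₁ y p₂) (q₂ + a / p₂) = deriv (fun y => G q₁ p₁ y p₂) q₂ := by
  obtain ⟨c, hc⟩ := hFG
  have hF : (fun y => F q₁ p₁ y p₂) = fun y => G q₁ p₁ (y - a / p₂) p₂ + c := by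
    funext y
    rw [← hc _ _ _ _ hp₂, sub_add_cancel]
  rw [hF, deriv_add_const, deriv_comp_sub_const (f := fun y => G q₁ p₁ y p₂),
    add_sub_cancel_right]

theorem deriv_shift_p₂
    (hFG : IsShiftedHamiltonian F G a) (hp₂ : p₂ ≠ 0)
    (hG : DifferentiableAt 𝕜 (fun z : 𝕜 × 𝕜 => G q₁ p₁ z.1 z.2) (q₂, p₂)) :
    deriv (fun y => F q₁ p₁ (q₂ + a / p₂) y) p₂
      = a / p₂ ^ 2 * deriv (fun y => G q₁ p₁ y p₂) q₂ + deriv (fun y => G q₁ p₁ q₂ y) p₂ := by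
  obtain ⟨c, hc⟩ := hFG
  set g : 𝕜 → 𝕜 := fun y => q₂ + a / p₂ - a / y
  have hg : HasDerivAt g (a / p₂ ^ 2) p₂ := by
    refine (((hasDerivAt_const p₂ a).div (hasDerivAt_id' p₂) hp₂).const_sub
      (q₂ + a / p₂)).congr_deriv ?_
    ring
  have hgp₂ : g p₂ = q₂ := by simp [g]
  have hF : (fun y => F q₁ p₁ (q₂ + a / p₂) y) =ᶠ[nhds p₂] fun y => G q₁ p₁ (g y) y + c := by
    filter_upwards [isOpen_ne.mem_nhds hp₂] with y hy
    rw [← hc _ _ _ _ hy, sub_add_cancel]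
  rw [hF.deriv_eq, deriv_add_const]
  rw [← hgp₂] at hG ⊢
  exact (hG.hasDerivAt_comp_prodMk_self hg).deriv

def HamiltonEqAt (H : 𝕜 → 𝕜 → 𝕜 → 𝕜 → 𝕜) (q₁ p₁ q₂ p₂ : 𝕜 → 𝕜) (τ : 𝕜) : Prop :=
  deriv q₁ τ = deriv (fun y => H (q₁ τ) y (q₂ τ) (p₂ τ)) (p₁ τ) ∧
  deriv p₁ τ = - deriv (fun y => H y (p₁ τ) (q₂ τ) (p₂ τ)) (q₁ τ) ∧
  deriv q₂ τ = deriv (fun y => H (q₁ τ) (p₁ τ) (q₂ τ) y) (p₂ τ) ∧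
  deriv p₂ τ = - deriv (fun y => H (q₁ τ) (p₁ τ) y (p₂ τ)) (q₂ τ)

theorem HamiltonEqAt.shift {q₁ p₁ q₂ p₂ : 𝕜 → 𝕜} {τ : 𝕜} (h : HamiltonEqAt G q₁ p₁ q₂ p₂ τ)
    (hFG : IsShiftedHamiltonian F G a)
    (hq₂ : DifferentiableAt 𝕜 q₂ τ) (hp₂ : DifferentiableAt 𝕜 p₂ τ) (hp₂τ : p₂ τ ≠ 0)
    (hG : DifferentiableAt 𝕜 (fun z : 𝕜 × 𝕜 => G (q₁ τ) (p₁ τ) z.1 z.2) (q₂ τ, p₂ τ)) :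
    HamiltonEqAt F q₁ p₁ (fun u => q₂ u + a / p₂ u) p₂ τ := by
  obtain ⟨hq₁', hp₁', hq₂', hp₂'⟩ := h
  have hQ₂ : deriv (fun u => q₂ u + a / p₂ u) τ = deriv q₂ τ - a / p₂ τ ^ 2 * deriv p₂ τ := by
    have hQ₂' : HasDerivAt (fun u => q₂ u + a / p₂ u)
        (deriv q₂ τ + (0 * p₂ τ - a * deriv p₂ τ) / p₂ τ ^ 2) τ :=
      hq₂.hasDerivAt.add ((hasDerivAt_const τ a).div hp₂.hasDerivAt hp₂τ)
    rw [hQ₂'.deriv]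
    ring
  refine ⟨?_, ?_, ?_, ?_⟩
  · rw [deriv_shift_p₁ hFG hp₂τ, hq₁']
  · rw [deriv_shift_q₁ hFG hp₂τ, hp₁']
  · rw [hQ₂, deriv_shift_p₂ hFG hp₂τ hG, hq₂', hp₂']
    ring
  · rw [deriv_shift_q₂ hFG hp₂τ, hp₂']

end CanonicalShift

section Backlund

variable {eta a1 a2 a3 a4 a5 t s : ℂ}

theorem isShiftedHamiltonian_H1 (h : Adm eta t s) :
    IsShiftedHamiltonian (H1 eta (a1+a5) a2 (a3+a5) (a4+a5) (-a5) · · · · t s)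
      (H1 eta a1 a2 a3 a4 a5 · · · · t s) a5 := by
  obtain ⟨ht0, ht1, hteta, -, -, -, hts⟩ := h
  -- The difference does not depend on `(q₁, p₁, q₂, p₂)`, so it is its value at `(0, 0, 0, 1)`.
  refine ⟨H1 eta (a1+a5) a2 (a3+a5) (a4+a5) (-a5) 0 0 a5 1 t s
    - H1 eta a1 a2 a3 a4 a5 0 0 0 1 t s, fun q1 p1 q2 p2 hp2 => ?_⟩
  have := sub_ne_zero.2 ht1
  have := sub_ne_zero.2 hteta
  have := sub_ne_zero.2 hts
  simp only [H1, Hvi]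
  field_simp
  ring

theorem isShiftedHamiltonian_H2 (h : Adm eta t s) :
    IsShiftedHamiltonian (H2 eta (a1+a5) a2 (a3+a5) (a4+a5) (-a5) · · · · t s)
      (H2 eta a1 a2 a3 a4 a5 · · · · t s) a5 := by
  obtain ⟨-, -, -, hs0, hs1, hseta, hts⟩ := h
  refine ⟨H2 eta (a1+a5) a2 (a3+a5) (a4+a5) (-a5) 0 0 a5 1 t s
    - H2 eta a1 a2 a3 a4 a5 0 0 0 1 t s, fun q1 p1 q2 p2 hp2 => ?_⟩
  have := sub_ne_zero.2 hs1
  have := sub_ne_zero.2 hseta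
  have := sub_ne_zero.2 hts.symm
  simp only [H2, H1, Hvi]
  field_simp
  ring

theorem differentiable_H1 (q1 p1 : ℂ) :
    Differentiable ℂ (fun z : ℂ × ℂ => H1 eta a1 a2 a3 a4 a5 q1 p1 z.1 z.2 t s) := by
  unfold H1 Hvi
  fun_prop

theorem differentiable_H2 (q1 p1 : ℂ) :
    Differentiable ℂ (fun z : ℂ × ℂ => H2 eta a1 a2 a3 a4 a5 q1 p1 z.1 z.2 t s) := by
  unfold H2 H1 Hvi
  fun_prop

end Backlund

theorem isSol_iff {eta a0 a1 a2 a3 a4 a5 : ℂ} {D : Set (ℂ × ℂ)} {q1 p1 q2 p2 : ℂ × ℂ → ℂ} :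
    IsSol eta a0 a1 a2 a3 a4 a5 D q1 p1 q2 p2 ↔
      IsOpen D ∧ (∀ x ∈ D, Adm eta x.1 x.2) ∧
      DifferentiableOn ℂ q1 D ∧ DifferentiableOn ℂ p1 D ∧
      DifferentiableOn ℂ q2 D ∧ DifferentiableOn ℂ p2 D ∧
      ∀ x ∈ D,
        HamiltonEqAt (H1 eta a1 a2 a3 a4 a5 · · · · x.1 x.2) (fun u => q1 (u, x.2))
          (fun u => p1 (u, x.2)) (fun u => q2 (u, x.2)) (fun u => p2 (u, x.2)) x.1 ∧
        HamiltonEqAt (H2 eta a1 a2 a3 a4 a5 · · · · x.1 x.2) (fun u => q1 (x.1, u))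
          (fun u => p1 (x.1, u)) (fun u => q2 (x.1, u)) (fun u => p2 (x.1, u)) x.2 := by
  simp only [IsSol, HamiltonEqAt, and_assoc]

theorem backlund_s2_general (eta a0 a1 a2 a3 a4 a5 : ℂ)
    (D : Set (ℂ × ℂ)) (q1 p1 q2 p2 : ℂ × ℂ → ℂ)
    (hsol : IsSol eta a0 a1 a2 a3 a4 a5 D q1 p1 q2 p2)
    (hp2 : ∀ x ∈ D, p2 x ≠ 0) :
    IsSol eta (a0+a5) (a1+a5) a2 (a3+a5) (a4+a5) (-a5) D
      q1 p1 (fun x => q2 x + a5 / p2 x) p2 := by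
  obtain ⟨hD, hAdm, hq1, hp1, hq2, hp2d, hHam⟩ := isSol_iff.1 hsol
  have hQ2 : DifferentiableOn ℂ (fun x => q2 x + a5 / p2 x) D := by
    simp only [div_eq_mul_inv]
    fun_prop (disch := assumption)
  refine isSol_iff.2 ⟨hD, hAdm, hq1, hp1, hQ2, hp2d, fun x hx => ?_⟩
  have hq2x := hq2.differentiableAt (hD.mem_nhds hx)
  have hp2x := hp2d.differentiableAt (hD.mem_nhds hx)
  obtain ⟨hHam1, hHam2⟩ := hHam x hx
  exact ⟨hHam1.shift (isShiftedHamiltonian_H1 (hAdm x hx)) hq2x.comp_prodMk_left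
      hp2x.comp_prodMk_left (hp2 x hx) (differentiable_H1 _ _ _),
    hHam2.shift (isShiftedHamiltonian_H2 (hAdm x hx)) hq2x.comp_prodMk_right
      hp2x.comp_prodMk_right (hp2 x hx) (differentiable_H2 _ _ _)⟩

/-- Bäcklund transformation `s₂` maps solutions of system (1) to solutions. -/
theorem backlund_s2 (eta a0 a1 a2 a3 a4 a5 : ℂ) (heta0 : eta ≠ 0) (heta1 : eta ≠ 1)
    (hrel : a0 + a1 + 2*a2 + a3 + a4 + 2*a5 = 1)
    (D : Set (ℂ × ℂ)) (q1 p1 q2 p2 : ℂ × ℂ → ℂ)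
    (hsol : IsSol eta a0 a1 a2 a3 a4 a5 D q1 p1 q2 p2)
    (hp2 : ∀ x ∈ D, p2 x ≠ 0) :
    IsSol eta (a0+a5) (a1+a5) a2 (a3+a5) (a4+a5) (-a5) D
      q1 p1 (fun x => q2 x + a5 / p2 x) p2 :=
  backlund_s2_general eta a0 a1 a2 a3 a4 a5 D q1 p1 q2 p2 hsol hp2

end
end

section
/- Let (q₁,p₁,q₂,p₂) be a holomorphic solution of system (1) on a domain D with data (η; α₀,α₁,α₂,α₃,α₄,α₅). Set η̃ = 1−η, t̃ = 1−t, s̃ = 1−s, and define Q₁ = 1−q₁, P₁ = −p₁, Q₂ = 1−q₂, P₂ = −p₂, each regarded as a holomorphic function of (t̃,s̃). Then (Q₁,P₁,Q₂,P₂) is a holomorphic solution of system (1) in the variables (t̃,s̃) with data (η̃; α₀,α₁,α₂,α₄,α₃,α₅), on the image of D (on which automatically t̃,s̃ ∉ {0,1,η̃} and t̃ ≠ s̃). (Bäcklund transformation π₄.) -/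
/-!
The substitution `(q, p) ↦ (1 - q, -p)` preserves `dq ∧ dp`, while `t ↦ 1 - t`, `s ↦ 1 - s`
reverses both times. Since `H₁` with the new data, evaluated at the new variables, equals `-H₁`
plus a function of `(t, s)` alone (`H1_one_sub`), every Hamilton equation is carried to itself;
`H₂` is `H₁` with the two pairs of variables exchanged, so the same identity handles the `s`-flow.
-/

noncomputable section

section Reflection

variable {𝕜 F : Type*} [NontriviallyNormedField 𝕜] [NormedAddCommGroup F] [NormedSpace 𝕜 F]
  {f g : 𝕜 → F} {a : 𝕜} {c : F}

theorem deriv_eq_of_forall_sub_eq (h : ∀ w, f (a - w) = c - g w) (z : 𝕜) :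
    deriv f (a - z) = deriv g z := by
  have hf : f = fun u => c - g (a - u) := funext fun u => by rw [← h, sub_sub_cancel]
  rw [hf, deriv_const_sub, deriv_comp_const_sub, sub_sub_cancel, neg_neg]

theorem deriv_eq_of_forall_neg_eq (h : ∀ w, f (-w) = c - g w) (z : 𝕜) :
    deriv f (-z) = deriv g z := by
  simpa using deriv_eq_of_forall_sub_eq (a := 0) (fun w => by simpa using h w) z

end Reflection

theorem DifferentiableOn.comp_const_sub_image {𝕜 E F : Type*} [NontriviallyNormedField 𝕜]
    [NormedAddCommGroup E] [NormedSpace 𝕜 E] [NormedAddCommGroup F] [NormedSpace 𝕜 F]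
    {f : E → F} {s : Set E} (hf : DifferentiableOn 𝕜 f s) (a : E) :
    DifferentiableOn 𝕜 (fun x => f (a - x)) ((a - ·) '' s) :=
  hf.comp ((differentiableOn_const a).sub differentiableOn_id)
    (by rintro _ ⟨y, hy, rfl⟩; simpa using hy)

section PartialDerivatives

variable (f : ℂ × ℂ → ℂ) (c : ℂ) (y : ℂ × ℂ)

theorem deriv_const_sub_comp_one_sub_fst :
    deriv (fun u => c - f (1 - u, y.2)) (1 - y.1) = deriv (fun u => f (u, y.2)) y.1 :=
  deriv_eq_of_forall_sub_eq (c := c) (fun w => by simp only [sub_sub_cancel]) y.1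

theorem deriv_const_sub_comp_one_sub_snd :
    deriv (fun u => c - f (y.1, 1 - u)) (1 - y.2) = deriv (fun u => f (y.1, u)) y.2 :=
  deriv_eq_of_forall_sub_eq (c := c) (fun w => by simp only [sub_sub_cancel]) y.2

theorem deriv_neg_comp_one_sub_fst :
    deriv (fun u => -f (1 - u, y.2)) (1 - y.1) = deriv (fun u => f (u, y.2)) y.1 :=
  deriv_eq_of_forall_sub_eq (c := 0) (fun w => by simp only [sub_sub_cancel, zero_sub]) y.1

theorem deriv_neg_comp_one_sub_snd :
    deriv (fun u => -f (y.1, 1 - u)) (1 - y.2) = deriv (fun u => f (y.1, u)) y.2 :=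
  deriv_eq_of_forall_sub_eq (c := 0) (fun w => by simp only [sub_sub_cancel, zero_sub]) y.2

end PartialDerivatives

theorem Adm.one_sub {eta t s : ℂ} (h : Adm eta t s) : Adm (1 - eta) (1 - t) (1 - s) := by
  obtain ⟨ht0, ht1, hte, hs0, hs1, hse, hts⟩ := h
  refine ⟨?_, ?_, ?_, ?_, ?_, ?_, ?_⟩ <;>
    simp only [ne_eq, sub_eq_zero, sub_eq_self, sub_right_inj] <;> tauto

theorem H1_one_sub (eta b1 b2 b3 b4 b5 q1 p1 q2 p2 t s : ℂ) :
    H1 (1-eta) b1 b2 b4 b3 b5 (1-q1) (-p1) (1-q2) (-p2) (1-t) (1-s)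
      = H1 (1-eta) b1 b2 b4 b3 b5 1 0 1 0 (1-t) (1-s) - H1 eta b1 b2 b3 b4 b5 q1 p1 q2 p2 t s := by
  have hη : (1-t)*((1-t)-1)*((1-t)-(1-eta)) = -(t*(t-1)*(t-eta)) := by ring
  have hs : (1-t)*((1-t)-1)*((1-t)-(1-s)) = -(t*(t-1)*(t-s)) := by ring
  simp only [H1, Hvi, hη, hs, div_neg]
  ring

section HamiltonianDerivatives

variable (eta b1 b2 b3 b4 b5 q1 p1 q2 p2 t s : ℂ)

theorem deriv_q1_H1_one_sub :
    deriv (fun w => H1 (1-eta) b1 b2 b4 b3 b5 w (-p1) (1-q2) (-p2) (1-t) (1-s)) (1-q1)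
      = deriv (fun w => H1 eta b1 b2 b3 b4 b5 w p1 q2 p2 t s) q1 :=
  deriv_eq_of_forall_sub_eq (fun w => H1_one_sub eta b1 b2 b3 b4 b5 w p1 q2 p2 t s) q1

theorem deriv_p1_H1_one_sub :
    deriv (fun w => H1 (1-eta) b1 b2 b4 b3 b5 (1-q1) w (1-q2) (-p2) (1-t) (1-s)) (-p1)
      = deriv (fun w => H1 eta b1 b2 b3 b4 b5 q1 w q2 p2 t s) p1 :=
  deriv_eq_of_forall_neg_eq (fun w => H1_one_sub eta b1 b2 b3 b4 b5 q1 w q2 p2 t s) p1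

theorem deriv_q2_H1_one_sub :
    deriv (fun w => H1 (1-eta) b1 b2 b4 b3 b5 (1-q1) (-p1) w (-p2) (1-t) (1-s)) (1-q2)
      = deriv (fun w => H1 eta b1 b2 b3 b4 b5 q1 p1 w p2 t s) q2 :=
  deriv_eq_of_forall_sub_eq (fun w => H1_one_sub eta b1 b2 b3 b4 b5 q1 p1 w p2 t s) q2

theorem deriv_p2_H1_one_sub :
    deriv (fun w => H1 (1-eta) b1 b2 b4 b3 b5 (1-q1) (-p1) (1-q2) w (1-t) (1-s)) (-p2)
      = deriv (fun w => H1 eta b1 b2 b3 b4 b5 q1 p1 q2 w t s) p2 :=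
  deriv_eq_of_forall_neg_eq (fun w => H1_one_sub eta b1 b2 b3 b4 b5 q1 p1 q2 w t s) p2

end HamiltonianDerivatives

theorem backlund_pi4_general (eta a0 a1 a2 a3 a4 a5 : ℂ)
    (D : Set (ℂ × ℂ)) (q1 p1 q2 p2 : ℂ × ℂ → ℂ)
    (hsol : IsSol eta a0 a1 a2 a3 a4 a5 D q1 p1 q2 p2) :
    IsSol (1-eta) a0 a1 a2 a4 a3 a5
      ((fun x : ℂ × ℂ => (1 - x.1, 1 - x.2)) '' D)
      (fun x => 1 - q1 (1 - x.1, 1 - x.2))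
      (fun x => - p1 (1 - x.1, 1 - x.2))
      (fun x => 1 - q2 (1 - x.1, 1 - x.2))
      (fun x => - p2 (1 - x.1, 1 - x.2)) := by
  obtain ⟨hD, hadm, hq1, hp1, hq2, hp2, hham⟩ := hsol
  -- `(1 - x.1, 1 - x.2)` is definitionally `1 - x` in the ring `ℂ × ℂ`.
  refine ⟨(Homeomorph.subLeft (1 : ℂ × ℂ)).isOpenMap D hD, ?_,
    (differentiableOn_const 1).sub (hq1.comp_const_sub_image 1), (hp1.comp_const_sub_image 1).neg,
    (differentiableOn_const 1).sub (hq2.comp_const_sub_image 1), (hp2.comp_const_sub_image 1).neg,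
    ?_⟩ <;> rintro _ ⟨y, hy, rfl⟩
  · exact (hadm y hy).one_sub
  · simp only [H2, sub_sub_cancel, Prod.mk.eta, deriv_const_sub_comp_one_sub_fst,
      deriv_const_sub_comp_one_sub_snd, deriv_neg_comp_one_sub_fst, deriv_neg_comp_one_sub_snd,
      deriv_q1_H1_one_sub, deriv_p1_H1_one_sub, deriv_q2_H1_one_sub, deriv_p2_H1_one_sub]
    exact hham y hy

/-- Bäcklund transformation `π₄` maps solutions of system (1) to solutions, with
`t̃ = 1−t`, `s̃ = 1−s`, `η̃ = 1−η` (the variable change is its own inverse). -/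
theorem backlund_pi4 (eta a0 a1 a2 a3 a4 a5 : ℂ) (heta0 : eta ≠ 0) (heta1 : eta ≠ 1)
    (hrel : a0 + a1 + 2*a2 + a3 + a4 + 2*a5 = 1)
    (D : Set (ℂ × ℂ)) (q1 p1 q2 p2 : ℂ × ℂ → ℂ)
    (hsol : IsSol eta a0 a1 a2 a3 a4 a5 D q1 p1 q2 p2) :
    IsSol (1-eta) a0 a1 a2 a4 a3 a5
      ((fun x : ℂ × ℂ => (1 - x.1, 1 - x.2)) '' D)
      (fun x => 1 - q1 (1 - x.1, 1 - x.2))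
      (fun x => - p1 (1 - x.1, 1 - x.2))
      (fun x => 1 - q2 (1 - x.1, 1 - x.2))
      (fun x => - p2 (1 - x.1, 1 - x.2)) :=
  backlund_pi4_general eta a0 a1 a2 a3 a4 a5 D q1 p1 q2 p2 hsol
end
end

section
/- There exists a polynomial K in four variables (x,y,z,w) with coefficients that are rational functions of (t,s) (regular wherever t,s ∉ {0,1,η} and t ≠ s) such that for all (q₁,p₁,q₂,p₂) ∈ ℂ⁴ with q₂ ≠ 0 and all admissible (t,s): H₁(q₁,p₁,q₂,p₂,t,s) = K(q₁, p₁, 1/q₂, −(q₂p₂+α₅)q₂; t, s). That is, the Hamiltonian H₁ becomes a polynomial in the coordinates (x₅,y₅,z₅,w₅) of the chart r₅. -/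
noncomputable section

open MvPolynomial

def dpoly (eta : ℂ) : MvPolynomial (Fin 2) ℂ :=
  X 0 * (X 0 - 1) * (X 0 - C eta) * (X 0 - X 1)

local notation "Cc" => (MvPolynomial.C : ℂ → MvPolynomial (Fin 2) ℂ)
local notation "T" => (X 0 : MvPolynomial (Fin 2) ℂ)
local notation "S" => (X 1 : MvPolynomial (Fin 2) ℂ)
local notation "X0" => (X 0 : MvPolynomial (Fin 4) (MvPolynomial (Fin 2) ℂ))
local notation "X1" => (X 1 : MvPolynomial (Fin 4) (MvPolynomial (Fin 2) ℂ))
local notation "X2" => (X 2 : MvPolynomial (Fin 4) (MvPolynomial (Fin 2) ℂ))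
local notation "X3" => (X 3 : MvPolynomial (Fin 4) (MvPolynomial (Fin 2) ℂ))

def cf0 (eta a1 a2 a3 a4 a5 : ℂ) : MvPolynomial (Fin 2) ℂ :=
  Cc (a2*a5) * T * S + Cc ((-1)*a2*a5) * T^2 * S + Cc ((-1)*eta*a2*a5) * T + Cc (eta*a2*a5) * T * S

def cf1 (eta a1 a2 a3 a4 a5 : ℂ) : MvPolynomial (Fin 2) ℂ :=
  Cc ((-1)*a2) * T * S + Cc (a2) * T^2

def cf2 (eta a1 a2 a3 a4 a5 : ℂ) : MvPolynomial (Fin 2) ℂ :=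
  Cc (a2) * T * S + Cc ((-1)*a2) * T^2 * S + Cc ((-1)*eta*a2) * T + Cc (eta*a2) * T * S

def cf3 (eta a1 a2 a3 a4 a5 : ℂ) : MvPolynomial (Fin 2) ℂ :=
  Cc ((-1)*eta*a5) * T * S + Cc (eta*a5) * T^2 + Cc ((-1)*eta*a4) * T * S + Cc (eta*a4) * T^2

def cf4 (eta a1 a2 a3 a4 a5 : ℂ) : MvPolynomial (Fin 2) ℂ :=
  Cc ((-1)) * T^2 + Cc ((1)) * T^2 * S + Cc (eta) * T + Cc ((-1)*eta) * T^2

def cf5 (eta a1 a2 a3 a4 a5 : ℂ) : MvPolynomial (Fin 2) ℂ :=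
  Cc ((-1)*eta) * T * S + Cc (eta) * T^2

def cf6 (eta a1 a2 a3 a4 a5 : ℂ) : MvPolynomial (Fin 2) ℂ :=
  Cc ((-1)*a2*a5) * T * S + Cc (a2*a5) * T^2 + Cc ((-1)*a2*a4) * T * S + Cc (a2*a4) * T^2 + Cc (a2*a3) * S + Cc ((-1)*a2*a3) * T + Cc ((-1)*a2*a3) * T * S + Cc (a2*a3) * T^2 + Cc (a2^2) * S + Cc ((-1)*a2^2) * T + Cc ((-1)*a2^2) * T * S + Cc (a2^2) * T^2 + Cc ((-1)*a1*a2) * T * S + Cc (a1*a2) * T^2 + Cc (eta*a2^2) * S + Cc ((-1)*eta*a2^2) * T + Cc (eta*a1*a2) * S + Cc ((-1)*eta*a1*a2) * T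

def cf7 (eta a1 a2 a3 a4 a5 : ℂ) : MvPolynomial (Fin 2) ℂ :=
  Cc (a2) * S + Cc ((-1)*a2) * T

def cf8 (eta a1 a2 a3 a4 a5 : ℂ) : MvPolynomial (Fin 2) ℂ :=
  Cc ((-1)*a2*a5) * T * S + Cc (a2*a5) * T^2 * S + Cc (eta*a2*a5) * S + Cc ((-1)*eta*a2*a5) * T * S

def cf9 (eta a1 a2 a3 a4 a5 : ℂ) : MvPolynomial (Fin 2) ℂ :=
  Cc ((-1)*a2) * S + Cc (a2) * T + Cc (a2) * T * S + Cc ((-1)*a2) * T^2 + Cc ((-1)*eta*a2) * S + Cc (eta*a2) * T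

def cf10 (eta a1 a2 a3 a4 a5 : ℂ) : MvPolynomial (Fin 2) ℂ :=
  Cc ((-1)*a2) * T * S + Cc (a2) * T^2 * S + Cc (eta*a2) * S + Cc ((-1)*eta*a2) * T * S

def cf11 (eta a1 a2 a3 a4 a5 : ℂ) : MvPolynomial (Fin 2) ℂ :=
  Cc ((2)*a5) * T * S + Cc ((-1)*a5) * T^2 + Cc ((-1)*a5) * T^2 * S + Cc (a4) * T * S + Cc ((-1)*a4) * T^2 + Cc (a1) * T * S + Cc ((-1)*a1) * T^2 + Cc ((-1)*eta*a5) * S + Cc ((2)*eta*a5) * T * S + Cc ((-1)*eta*a5) * T^2 + Cc (eta*a4) * T * S + Cc ((-1)*eta*a4) * T^2 + Cc ((-1)*eta*a3) * S + Cc (eta*a3) * T + Cc (eta*a3) * T * S + Cc ((-1)*eta*a3) * T^2 + Cc ((-2)*eta*a2) * S + Cc ((2)*eta*a2) * T + Cc ((-1)*eta*a1) * S + Cc (eta*a1) * T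

def cf12 (eta a1 a2 a3 a4 a5 : ℂ) : MvPolynomial (Fin 2) ℂ :=
  Cc ((-2)) * T * S + Cc ((2)) * T^2

def cf13 (eta a1 a2 a3 a4 a5 : ℂ) : MvPolynomial (Fin 2) ℂ :=
  Cc ((2)) * T * S + Cc ((-2)) * T^2 * S + Cc ((-2)*eta) * T + Cc ((2)*eta) * T * S

def cf14 (eta a1 a2 a3 a4 a5 : ℂ) : MvPolynomial (Fin 2) ℂ :=
  Cc (eta) * T * S + Cc ((-1)*eta) * T^2

def cf15 (eta a1 a2 a3 a4 a5 : ℂ) : MvPolynomial (Fin 2) ℂ :=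
  Cc ((-1)*a2^2) * S + Cc (a2^2) * T

def cf16 (eta a1 a2 a3 a4 a5 : ℂ) : MvPolynomial (Fin 2) ℂ :=
  Cc ((-1)*a5) * T * S + Cc (a5) * T^2 + Cc ((-1)*a4) * T * S + Cc (a4) * T^2 + Cc (a3) * S + Cc ((-1)*a3) * T + Cc ((-1)*a3) * T * S + Cc (a3) * T^2 + Cc ((2)*a2) * S + Cc ((-2)*a2) * T + Cc ((-1)*a1) * T * S + Cc (a1) * T^2 + Cc ((2)*eta*a2) * S + Cc ((-2)*eta*a2) * T + Cc (eta*a1) * S + Cc ((-1)*eta*a1) * T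

def cf17 (eta a1 a2 a3 a4 a5 : ℂ) : MvPolynomial (Fin 2) ℂ :=
  Cc ((1)) * S + Cc ((-1)) * T

def cf18 (eta a1 a2 a3 a4 a5 : ℂ) : MvPolynomial (Fin 2) ℂ :=
  Cc ((-1)*a5) * T * S + Cc (a5) * T^2 * S + Cc (eta*a5) * S + Cc ((-1)*eta*a5) * T * S

def cf19 (eta a1 a2 a3 a4 a5 : ℂ) : MvPolynomial (Fin 2) ℂ :=
  Cc ((-1)) * S + Cc ((1)) * T + Cc ((1)) * T * S + Cc ((-1)) * T^2 + Cc ((-1)*eta) * S + Cc (eta) * T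

def cf20 (eta a1 a2 a3 a4 a5 : ℂ) : MvPolynomial (Fin 2) ℂ :=
  Cc ((-1)) * T * S + Cc ((1)) * T^2 * S + Cc (eta) * S + Cc ((-1)*eta) * T * S

def cf21 (eta a1 a2 a3 a4 a5 : ℂ) : MvPolynomial (Fin 2) ℂ :=
  Cc ((-1)) * T * S + Cc ((1)) * T^2 + Cc ((-1)*eta) * S + Cc (eta) * T + Cc ((-1)*eta) * T * S + Cc (eta) * T^2

def cf22 (eta a1 a2 a3 a4 a5 : ℂ) : MvPolynomial (Fin 2) ℂ :=
  Cc ((-2)*a2) * S + Cc ((2)*a2) * T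

def cf23 (eta a1 a2 a3 a4 a5 : ℂ) : MvPolynomial (Fin 2) ℂ :=
  Cc ((1)) * S + Cc ((-1)) * T + Cc ((1)) * T * S + Cc ((-1)) * T^2 + Cc (eta) * S + Cc ((-1)*eta) * T

def cf24 (eta a1 a2 a3 a4 a5 : ℂ) : MvPolynomial (Fin 2) ℂ :=
  Cc ((-1)) * S + Cc ((1)) * T

set_option maxHeartbeats 1000000 in
def Npoly (eta a1 a2 a3 a4 a5 : ℂ) : MvPolynomial (Fin 4) (MvPolynomial (Fin 2) ℂ) :=
  C (cf0 eta a1 a2 a3 a4 a5)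
  + C (cf1 eta a1 a2 a3 a4 a5) * X3
  + C (cf2 eta a1 a2 a3 a4 a5) * X2 * X3
  + C (cf3 eta a1 a2 a3 a4 a5) * X1
  + C (cf4 eta a1 a2 a3 a4 a5) * X1 * X3
  + C (cf5 eta a1 a2 a3 a4 a5) * X1 * X2 * X3
  + C (cf6 eta a1 a2 a3 a4 a5) * X0
  + C (cf7 eta a1 a2 a3 a4 a5) * X0 * X3
  + C (cf8 eta a1 a2 a3 a4 a5) * X0 * X2
  + C (cf9 eta a1 a2 a3 a4 a5) * X0 * X2 * X3
  + C (cf10 eta a1 a2 a3 a4 a5) * X0 * X2^2 * X3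
  + C (cf11 eta a1 a2 a3 a4 a5) * X0 * X1
  + C (cf12 eta a1 a2 a3 a4 a5) * X0 * X1 * X3
  + C (cf13 eta a1 a2 a3 a4 a5) * X0 * X1 * X2 * X3
  + C (cf14 eta a1 a2 a3 a4 a5) * X0 * X1^2
  + C (cf15 eta a1 a2 a3 a4 a5) * X0^2
  + C (cf16 eta a1 a2 a3 a4 a5) * X0^2 * X1
  + C (cf17 eta a1 a2 a3 a4 a5) * X0^2 * X1 * X3
  + C (cf18 eta a1 a2 a3 a4 a5) * X0^2 * X1 * X2
  + C (cf19 eta a1 a2 a3 a4 a5) * X0^2 * X1 * X2 * X3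
  + C (cf20 eta a1 a2 a3 a4 a5) * X0^2 * X1 * X2^2 * X3
  + C (cf21 eta a1 a2 a3 a4 a5) * X0^2 * X1^2
  + C (cf22 eta a1 a2 a3 a4 a5) * X0^3 * X1
  + C (cf23 eta a1 a2 a3 a4 a5) * X0^3 * X1^2
  + C (cf24 eta a1 a2 a3 a4 a5) * X0^4 * X1^2

set_option maxHeartbeats 4000000 in
/-- In the chart `r₅`, the Hamiltonian `H₁` becomes a polynomial in the chart
coordinates `(x₅,y₅,z₅,w₅) = (q₁, p₁, 1/q₂, −(q₂p₂+α₅)q₂)`, with coefficients which are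
rational functions of `(t,s)` regular on the admissible set (encoded by a polynomial
numerator `N` and a common denominator `d` which is nonvanishing there). -/
theorem H1_polynomial_in_r5 (eta a0 a1 a2 a3 a4 a5 : ℂ)
    (heta0 : eta ≠ 0) (heta1 : eta ≠ 1)
    (hrel : a0 + a1 + 2*a2 + a3 + a4 + 2*a5 = 1) :
    ∃ (N : MvPolynomial (Fin 4) (MvPolynomial (Fin 2) ℂ))
      (d : MvPolynomial (Fin 2) ℂ),
      (∀ t s : ℂ, Adm eta t s → MvPolynomial.eval ![t, s] d ≠ 0) ∧
      ∀ t s q1 p1 q2 p2 : ℂ, Adm eta t s → q2 ≠ 0 →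
        MvPolynomial.eval ![t, s] d * H1 eta a1 a2 a3 a4 a5 q1 p1 q2 p2 t s =
          MvPolynomial.eval ![q1, p1, 1/q2, -(q2*p2 + a5)*q2]
            (MvPolynomial.map (MvPolynomial.eval ![t, s]) N) := by
  refine ⟨Npoly eta a1 a2 a3 a4 a5, dpoly eta, ?_, ?_⟩
  · rintro t s ⟨ht0, ht1, hte, -, -, -, hts⟩
    simp only [dpoly, map_mul, map_sub, map_one, eval_X, eval_C,
      Matrix.cons_val_zero, Matrix.cons_val_one, Matrix.head_cons]
    exact mul_ne_zero (mul_ne_zero (mul_ne_zero ht0 (sub_ne_zero.2 ht1))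
      (sub_ne_zero.2 hte)) (sub_ne_zero.2 hts)
  · rintro t s q1 p1 q2 p2 ⟨ht0, ht1, hte, hs0, hs1, hse, hts⟩ hq2
    have h1 : t - 1 ≠ 0 := sub_ne_zero.2 ht1
    have h2 : t - eta ≠ 0 := sub_ne_zero.2 hte
    have h3 : t - s ≠ 0 := sub_ne_zero.2 hts
    have hA : t*(t-1)*(t-eta) ≠ 0 := mul_ne_zero (mul_ne_zero ht0 h1) h2
    have hB : t*(t-1)*(t-s) ≠ 0 := mul_ne_zero (mul_ne_zero ht0 h1) h3
    have hd : MvPolynomial.eval ![t, s] (dpoly eta) = t*(t-1)*(t-eta)*(t-s) := by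
      simp [dpoly]
    have hsplit : H1 eta a1 a2 a3 a4 a5 q1 p1 q2 p2 t s
        = ((-1)*q1^2*p1*q2*p2 + q1^2*p1*q2^2*p2 + (-1)*q1^3*p1^2 + q1^4*p1^2 + (2)*t*q1*p1*q2*p2 + (-2)*t*q1*p1*q2^2*p2 + t*q1^2*p1^2 + (-1)*t*q1^3*p1^2 + (-1)*t^2*p1*q2*p2 + t^2*p1*q2^2*p2 + (-1)*a5*q1^2*p1 + a5*q1^2*p1*q2 + a5*t*q1*p1 + (-2)*a5*t*q1*p1*q2 + a5*t*q1^2*p1 + a5*t^2*p1*q2 + (-1)*a5*t^2*q1*p1 + (-1)*a4*t*q1*p1 + a4*t*q1^2*p1 + (-1)*a3*q1^2*p1 + a3*t*q1^2*p1 + (-1)*a2*q1*q2*p2 + a2*q1*q2^2*p2 + (-2)*a2*q1^2*p1 + (2)*a2*q1^3*p1 + a2*t*q2*p2 + (-1)*a2*t*q2^2*p2 + (-1)*a2*a5*q1 + a2*a5*q1*q2 + (-1)*a2*a5*t*q2 + (2)*a2*a5*t*q1 + a2*a4*t*q1 + (-1)*a2*a3*q1 + a2*a3*t*q1 + (-1)*a2^2*q1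 + a2^2*q1^2 + a2^2*t*q1 + (-1)*a1*t*q1*p1 + a1*t*q1^2*p1 + a1*a2*t*q1 + eta*q1^2*p1^2 + (-1)*eta*q1^3*p1^2 + (-1)*eta*t*q1*p1^2 + eta*t*q1^2*p1^2 + eta*a4*t*p1 + (-1)*eta*a4*t*q1*p1 + eta*a3*q1*p1 + (-1)*eta*a3*t*q1*p1 + (2)*eta*a2*q1*p1 + (-2)*eta*a2*q1^2*p1 + (-1)*eta*a2*a5*q1 + (-1)*eta*a2^2*q1 + eta*a1*q1*p1 + (-1)*eta*a1*q1^2*p1 + (-1)*eta*a1*a2*q1) / (t*(t-1)*(t-eta)) + (s*q1^2*p1*p2 + (-1)*s*q1^2*p1*q2*p2 + t*p1*q2^2*p2 + (-2)*t*q1*p1*q2*p2 + t*q1^2*p1*q2*p2 + (-1)*t*s*p1*q2*p2 + (2)*t*s*q1*p1*q2*p2 + (-1)*t*s*q1^2*p1*p2 + t^2*p1*q2*p2 + (-1)*t^2*p1*q2^2*p2 + a5*s*q1*p1 + (-1)*a5*s*q1^2*p1 + a5*t*p1*q2 + (-2)*a5*t*q1*p1 + a5*t*q1^2*p1 + (-1)*a5*t^2*p1*q2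 + a5*t^2*q1*p1 + a2*s*q1*p2 + (-1)*a2*s*q1*q2*p2 + (-1)*a2*t*q2*p2 + a2*t*q1*q2*p2 + a2*t*s*q2*p2 + (-1)*a2*t*s*q1*p2) / (t*(t-1)*(t-s)) := by
      simp only [H1, Hvi]
      ring
    have e1 : ∀ (c A X : ℂ), A ≠ 0 → c * A * (X / A) = c * X := by
      intro c A X h
      rw [mul_assoc, mul_comm A (X/A), div_mul_cancel₀ X h]
    rw [hd, hsplit]
    have expand : t*(t-1)*(t-eta)*(t-s) *
        (((-1)*q1^2*p1*q2*p2 + q1^2*p1*q2^2*p2 + (-1)*q1^3*p1^2 + q1^4*p1^2 + (2)*t*q1*p1*q2*p2 + (-2)*t*q1*p1*q2^2*p2 + t*q1^2*p1^2 + (-1)*t*q1^3*p1^2 + (-1)*t^2*p1*q2*p2 + t^2*p1*q2^2*p2 + (-1)*a5*q1^2*p1 + a5*q1^2*p1*q2 + a5*t*q1*p1 + (-2)*a5*t*q1*p1*q2 + a5*t*q1^2*p1 + a5*t^2*p1*q2 + (-1)*a5*t^2*q1*p1 + (-1)*a4*t*q1*p1 + a4*t*q1^2*p1 + (-1)*a3*q1^2*p1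 + a3*t*q1^2*p1 + (-1)*a2*q1*q2*p2 + a2*q1*q2^2*p2 + (-2)*a2*q1^2*p1 + (2)*a2*q1^3*p1 + a2*t*q2*p2 + (-1)*a2*t*q2^2*p2 + (-1)*a2*a5*q1 + a2*a5*q1*q2 + (-1)*a2*a5*t*q2 + (2)*a2*a5*t*q1 + a2*a4*t*q1 + (-1)*a2*a3*q1 + a2*a3*t*q1 + (-1)*a2^2*q1 + a2^2*q1^2 + a2^2*t*q1 + (-1)*a1*t*q1*p1 + a1*t*q1^2*p1 + a1*a2*t*q1 + eta*q1^2*p1^2 + (-1)*eta*q1^3*p1^2 + (-1)*eta*t*q1*p1^2 + eta*t*q1^2*p1^2 + eta*a4*t*p1 + (-1)*eta*a4*t*q1*p1 + eta*a3*q1*p1 + (-1)*eta*a3*t*q1*p1 + (2)*eta*a2*q1*p1 + (-2)*eta*a2*q1^2*p1 + (-1)*eta*a2*a5*q1 + (-1)*eta*a2^2*q1 + eta*a1*q1*p1 + (-1)*eta*a1*q1^2*p1 + (-1)*eta*a1*a2*q1) / (t*(t-1)*(t-eta)) + (s*q1^2*p1*p2 + (-1)*s*q1^2*p1*q2*p2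 + t*p1*q2^2*p2 + (-2)*t*q1*p1*q2*p2 + t*q1^2*p1*q2*p2 + (-1)*t*s*p1*q2*p2 + (2)*t*s*q1*p1*q2*p2 + (-1)*t*s*q1^2*p1*p2 + t^2*p1*q2*p2 + (-1)*t^2*p1*q2^2*p2 + a5*s*q1*p1 + (-1)*a5*s*q1^2*p1 + a5*t*p1*q2 + (-2)*a5*t*q1*p1 + a5*t*q1^2*p1 + (-1)*a5*t^2*p1*q2 + a5*t^2*q1*p1 + a2*s*q1*p2 + (-1)*a2*s*q1*q2*p2 + (-1)*a2*t*q2*p2 + a2*t*q1*q2*p2 + a2*t*s*q2*p2 + (-1)*a2*t*s*q1*p2) / (t*(t-1)*(t-s)))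
        = (t-s)*(t*(t-1)*(t-eta))*(((-1)*q1^2*p1*q2*p2 + q1^2*p1*q2^2*p2 + (-1)*q1^3*p1^2 + q1^4*p1^2 + (2)*t*q1*p1*q2*p2 + (-2)*t*q1*p1*q2^2*p2 + t*q1^2*p1^2 + (-1)*t*q1^3*p1^2 + (-1)*t^2*p1*q2*p2 + t^2*p1*q2^2*p2 + (-1)*a5*q1^2*p1 + a5*q1^2*p1*q2 + a5*t*q1*p1 + (-2)*a5*t*q1*p1*q2 + a5*t*q1^2*p1 + a5*t^2*p1*q2 + (-1)*a5*t^2*q1*p1 + (-1)*a4*t*q1*p1 + a4*t*q1^2*p1 + (-1)*a3*q1^2*p1 + a3*t*q1^2*p1 + (-1)*a2*q1*q2*p2 + a2*q1*q2^2*p2 + (-2)*a2*q1^2*p1 + (2)*a2*q1^3*p1 + a2*t*q2*p2 + (-1)*a2*t*q2^2*p2 + (-1)*a2*a5*q1 + a2*a5*q1*q2 + (-1)*a2*a5*t*q2 + (2)*a2*a5*t*q1 + a2*a4*t*q1 + (-1)*a2*a3*q1 + a2*a3*t*q1 + (-1)*a2^2*q1 + a2^2*q1^2 + a2^2*t*q1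 + (-1)*a1*t*q1*p1 + a1*t*q1^2*p1 + a1*a2*t*q1 + eta*q1^2*p1^2 + (-1)*eta*q1^3*p1^2 + (-1)*eta*t*q1*p1^2 + eta*t*q1^2*p1^2 + eta*a4*t*p1 + (-1)*eta*a4*t*q1*p1 + eta*a3*q1*p1 + (-1)*eta*a3*t*q1*p1 + (2)*eta*a2*q1*p1 + (-2)*eta*a2*q1^2*p1 + (-1)*eta*a2*a5*q1 + (-1)*eta*a2^2*q1 + eta*a1*q1*p1 + (-1)*eta*a1*q1^2*p1 + (-1)*eta*a1*a2*q1) / (t*(t-1)*(t-eta)))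
          + (t-eta)*(t*(t-1)*(t-s))*((s*q1^2*p1*p2 + (-1)*s*q1^2*p1*q2*p2 + t*p1*q2^2*p2 + (-2)*t*q1*p1*q2*p2 + t*q1^2*p1*q2*p2 + (-1)*t*s*p1*q2*p2 + (2)*t*s*q1*p1*q2*p2 + (-1)*t*s*q1^2*p1*p2 + t^2*p1*q2*p2 + (-1)*t^2*p1*q2^2*p2 + a5*s*q1*p1 + (-1)*a5*s*q1^2*p1 + a5*t*p1*q2 + (-2)*a5*t*q1*p1 + a5*t*q1^2*p1 + (-1)*a5*t^2*p1*q2 + a5*t^2*q1*p1 + a2*s*q1*p2 + (-1)*a2*s*q1*q2*p2 + (-1)*a2*t*q2*p2 + a2*t*q1*q2*p2 + a2*t*s*q2*p2 + (-1)*a2*t*s*q1*p2) / (t*(t-1)*(t-s))) := by ring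
    rw [expand, e1 _ _ _ hA, e1 _ _ _ hB]
    simp only [Npoly,cf0, cf1, cf2, cf3, cf4, cf5, cf6, cf7, cf8, cf9, cf10, cf11, cf12, cf13, cf14, cf15, cf16, cf17, cf18, cf19, cf20, cf21, cf22, cf23, cf24,
      map_add, map_mul, map_pow, MvPolynomial.map_C, MvPolynomial.map_X,
      eval_C, eval_X,
      Matrix.cons_val_zero, Matrix.cons_val_one, Matrix.head_cons,
      Matrix.cons_val_two, Matrix.cons_val_three, Matrix.tail_cons]
    have hz : q2 * (1/q2) = 1 := by field_simp
    linear_combination ((-1)*s*q1^2*p1*q2*p2 + t*q1^2*p1*q2*p2 + (2)*t*s*q1*p1*q2*p2 + (-1)*t*s*q1^2*p1*p2 + t*s*q1^2*p1*q2*p2 + (-1)*t*s*q1^2*p1*(1/q2)*q2*p2 + (-1)*t^2*q1^2*p1*q2*p2 + (-2)*t^2*s*q1*p1*q2*p2 + t^2*s*q1^2*p1*p2 + t^2*s*q1^2*p1*(1/q2)*q2*p2 + (-1)*a5*s*q1^2*p1 + a5*t*q1^2*p1 + (2)*a5*t*s*q1*p1 + a5*t*s*q1^2*p1 + (-1)*a5*t*s*q1^2*p1*(1/q2)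 + (-1)*a5*t^2*q1^2*p1 + (-2)*a5*t^2*s*q1*p1 + a5*t^2*s*q1^2*p1*(1/q2) + (-1)*a2*s*q1*q2*p2 + a2*t*q1*q2*p2 + a2*t*s*q2*p2 + (-1)*a2*t*s*q1*p2 + a2*t*s*q1*q2*p2 + (-1)*a2*t*s*q1*(1/q2)*q2*p2 + (-1)*a2*t^2*q1*q2*p2 + (-1)*a2*t^2*s*q2*p2 + a2*t^2*s*q1*p2 + a2*t^2*s*q1*(1/q2)*q2*p2 + (-1)*a2*a5*s*q1 + a2*a5*t*q1 + a2*a5*t*s + a2*a5*t*s*q1 + (-1)*a2*a5*t*s*q1*(1/q2) + (-1)*a2*a5*t^2*q1 + (-1)*a2*a5*t^2*s + a2*a5*t^2*s*q1*(1/q2) + eta*s*q1^2*p1*p2 + (-1)*eta*s*q1^2*p1*q2*p2 + eta*s*q1^2*p1*(1/q2)*q2*p2 + (-2)*eta*t*q1*p1*q2*p2 + eta*t*q1^2*p1*q2*p2 + (-1)*eta*t*s*p1*q2*p2 + (2)*eta*t*s*q1*p1*q2*p2 + (-1)*eta*t*s*q1^2*p1*p2 + (-1)*eta*t*s*q1^2*p1*(1/q2)*q2*p2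 + eta*t^2*p1*q2*p2 + (-1)*eta*a5*s*q1^2*p1 + eta*a5*s*q1^2*p1*(1/q2) + (-2)*eta*a5*t*q1*p1 + eta*a5*t*q1^2*p1 + (-1)*eta*a5*t*s*p1 + (2)*eta*a5*t*s*q1*p1 + (-1)*eta*a5*t*s*q1^2*p1*(1/q2) + eta*a5*t^2*p1 + eta*a2*s*q1*p2 + (-1)*eta*a2*s*q1*q2*p2 + eta*a2*s*q1*(1/q2)*q2*p2 + (-1)*eta*a2*t*q2*p2 + eta*a2*t*q1*q2*p2 + eta*a2*t*s*q2*p2 + (-1)*eta*a2*t*s*q1*p2 + (-1)*eta*a2*t*s*q1*(1/q2)*q2*p2 + (-1)*eta*a2*a5*s*q1 + eta*a2*a5*s*q1*(1/q2) + (-1)*eta*a2*a5*t + eta*a2*a5*t*q1 + eta*a2*a5*t*s + (-1)*eta*a2*a5*t*s*q1*(1/q2)) * hz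
end
end

section
/- Suppose α₂ = 0. Then for all admissible (t,s), all q₁,q₂ ∈ ℂ and all p₂ ∈ ℂ, the partial derivatives ∂H₁/∂q₁ and ∂H₂/∂q₁ both vanish identically on the hyperplane p₁ = 0: (∂H₁/∂q₁)(q₁,0,q₂,p₂,t,s) = 0 and (∂H₂/∂q₁)(q₁,0,q₂,p₂,t,s) = 0. Consequently p₁ ≡ 0 defines an invariant divisor of system (1), i.e., system (1) admits the particular solutions with p₁ identically zero. -/
noncomputable section

/-- If `α₂ = 0`, then `∂H₁/∂q₁` and `∂H₂/∂q₁` vanish identically on the hyperplane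
`p₁ = 0`; hence `p₁ ≡ 0` is an invariant divisor of system (1). -/
theorem invariant_divisor_p1 (eta a0 a1 a2 a3 a4 a5 : ℂ)
    (heta0 : eta ≠ 0) (heta1 : eta ≠ 1)
    (hrel : a0 + a1 + 2*a2 + a3 + a4 + 2*a5 = 1) (ha2 : a2 = 0) :
    ∀ t s : ℂ, Adm eta t s → ∀ q1 q2 p2 : ℂ,
      deriv (fun q => H1 eta a1 a2 a3 a4 a5 q 0 q2 p2 t s) q1 = 0 ∧
      deriv (fun q => H2 eta a1 a2 a3 a4 a5 q 0 q2 p2 t s) q1 = 0 := by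
  intro t s _ q1 q2 p2
  constructor
  · have h : (fun q => H1 eta a1 a2 a3 a4 a5 q 0 q2 p2 t s) = fun _ => (0 : ℂ) := by
      funext q; simp [H1, Hvi, ha2]
    rw [h]; simp
  · have h : (fun q => H2 eta a1 a2 a3 a4 a5 q 0 q2 p2 t s)
        = fun _ => Hvi eta a1 a5 a3 a4 q2 p2 s := by
      funext q; simp [H2, H1, ha2]
    rw [h]; simp
end
end

section
/- Suppose α₅ = 0. Then for all admissible (t,s), all q₁,q₂ ∈ ℂ and all p₁ ∈ ℂ, the partial derivatives ∂H₁/∂q₂ and ∂H₂/∂q₂ both vanish identically on the hyperplane p₂ = 0: (∂H₁/∂q₂)(q₁,p₁,q₂,0,t,s) = 0 and (∂H₂/∂q₂)(q₁,p₁,q₂,0,t,s) = 0. Consequently p₂ ≡ 0 defines an invariant divisor of system (1), i.e., system (1) admits the particular solutions with p₂ identically zero. -/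
noncomputable section

/-- If `α₅ = 0`, then `∂H₁/∂q₂` and `∂H₂/∂q₂` vanish identically on the hyperplane
`p₂ = 0`; hence `p₂ ≡ 0` is an invariant divisor of system (1). -/
theorem invariant_divisor_p2 (eta a0 a1 a2 a3 a4 a5 : ℂ)
    (heta0 : eta ≠ 0) (heta1 : eta ≠ 1)
    (hrel : a0 + a1 + 2*a2 + a3 + a4 + 2*a5 = 1) (ha5 : a5 = 0) :
    ∀ t s : ℂ, Adm eta t s → ∀ q1 p1 q2 : ℂ,
      deriv (fun q => H1 eta a1 a2 a3 a4 a5 q1 p1 q 0 t s) q2 = 0 ∧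
      deriv (fun q => H2 eta a1 a2 a3 a4 a5 q1 p1 q 0 t s) q2 = 0 := by
  subst ha5
  intro t s _ q1 p1 q2
  constructor
  · have h : (fun q => H1 eta a1 a2 a3 a4 0 q1 p1 q 0 t s)
        = fun _ => Hvi eta a1 a2 a3 a4 q1 p1 t := by
      funext q; simp [H1]
    rw [h]; exact deriv_const _ _
  · have h : (fun q => H2 eta a1 a2 a3 a4 0 q1 p1 q 0 t s) = fun _ => (0:ℂ) := by
      funext q; simp [H2, H1, Hvi]
    rw [h]; exact deriv_const _ _
end
end

section
/- Suppose α₀ = 0, i.e., α₁ + 2α₂ + α₃ + α₄ + 2α₅ = 1. Then for all admissible (t,s) and all p₁,p₂ ∈ ℂ, evaluating at q₁ = t and q₂ = s one has (∂H₁/∂p₁)(t,p₁,s,p₂,t,s) = 1, (∂H₁/∂p₂)(t,p₁,s,p₂,t,s) = 0, (∂H₂/∂p₁)(t,p₁,s,p₂,t,s) = 0, and (∂H₂/∂p₂)(t,p₁,s,p₂,t,s) = 1. Consequently the locus q₁ − t = 0, q₂ − s = 0 is invariant under system (1), i.e., system (1) admits the particular solution q₁ = t, q₂ = s when α₀ =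 0. -/
noncomputable section

lemma Hvi_lin (eta b1 b2 b3 b4 t : ℂ) (ht0 : t ≠ 0) (ht1 : t - 1 ≠ 0)
    (hte : t - eta ≠ 0) (y : ℂ) :
    Hvi eta b1 b2 b3 b4 t y t - Hvi eta b1 b2 b3 b4 t 0 t = (b1 + 2*b2 + b3 + b4) * y := by
  rw [Hvi, Hvi, div_sub_div_same, div_eq_iff (mul_ne_zero (mul_ne_zero ht0 ht1) hte)]
  ring

lemma key1 (eta b1 b2 b3 b4 b5 t s w y : ℂ) (hsum : b1 + 2*b2 + b3 + b4 + 2*b5 = 1)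
    (ht0 : t ≠ 0) (ht1 : t - 1 ≠ 0) (hte : t - eta ≠ 0) (hts : t - s ≠ 0) :
    H1 eta b1 b2 b3 b4 b5 t y s w t s = y + H1 eta b1 b2 b3 b4 b5 t 0 s w t s := by
  have hv := Hvi_lin eta b1 b2 b3 b4 t ht0 ht1 hte y
  have h2 : ((t-s)*t*(t-1) + t*(t-1)*(t-s))/(t*(t-1)*(t-s))
      + (t-t)*((t-1)*t+(t-t)*s)/(t*(t-1)*(t-eta)) = 2 := by
    rw [sub_self]
    field_simp
    ring
  have h3 : ((t-1)*(s*t^2+t*s^2) - (t-s)*s*(t^2+t) - 2*t*(s-1)*t*s)/(t*(t-1)*(t-s))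
      - (t-t)^2*s*(s-1)/(t*(t-1)*(t-eta)) = 0 := by
    have hnum : (t-1)*(s*t^2+t*s^2) - (t-s)*s*(t^2+t) - 2*t*(s-1)*t*s = 0 := by ring
    rw [hnum, sub_self]
    simp
  simp only [H1]
  linear_combination hv + b5*y*h2 - y*w*h3 + y*hsum

lemma key2 (eta b1 b2 b3 b4 b5 t s v y : ℂ)
    (ht0 : t ≠ 0) (ht1 : t - 1 ≠ 0) (hte : t - eta ≠ 0) (hts : t - s ≠ 0) :
    H1 eta b1 b2 b3 b4 b5 t v s y t s = H1 eta b1 b2 b3 b4 b5 t v s 0 t s := by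
  have h1 : (-(t-1)*s*t + t*(s-1)*s + (t-s)*t*s)/(t*(t-1)*(t-s))
      + (t-t)*s*(s-1)/(t*(t-1)*(t-eta)) = 0 := by
    have hnum : -(t-1)*s*t + t*(s-1)*s + (t-s)*t*s = 0 := by ring
    rw [hnum, sub_self]
    simp
  have h3 : ((t-1)*(s*t^2+t*s^2) - (t-s)*s*(t^2+t) - 2*t*(s-1)*t*s)/(t*(t-1)*(t-s))
      - (t-t)^2*s*(s-1)/(t*(t-1)*(t-eta)) = 0 := by
    have hnum : (t-1)*(s*t^2+t*s^2) - (t-s)*s*(t^2+t) - 2*t*(s-1)*t*s = 0 := by ring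
    rw [hnum, sub_self]
    simp
  simp only [H1]
  linear_combination b2*y*h1 - v*y*h3

/-- If `α₀ = 0`, then at `q₁ = t`, `q₂ = s` one has `∂H₁/∂p₁ = 1`, `∂H₁/∂p₂ = 0`,
`∂H₂/∂p₁ = 0`, `∂H₂/∂p₂ = 1`; hence the locus `q₁ = t`, `q₂ = s` is invariant under
system (1). -/
theorem invariant_locus_q1t_q2s (eta a0 a1 a2 a3 a4 a5 : ℂ)
    (heta0 : eta ≠ 0) (heta1 : eta ≠ 1)
    (hrel : a0 + a1 + 2*a2 + a3 + a4 + 2*a5 = 1) (ha0 : a0 = 0) :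
    ∀ t s : ℂ, Adm eta t s → ∀ p1 p2 : ℂ,
      deriv (fun y => H1 eta a1 a2 a3 a4 a5 t y s p2 t s) p1 = 1 ∧
      deriv (fun y => H1 eta a1 a2 a3 a4 a5 t p1 s y t s) p2 = 0 ∧
      deriv (fun y => H2 eta a1 a2 a3 a4 a5 t y s p2 t s) p1 = 0 ∧
      deriv (fun y => H2 eta a1 a2 a3 a4 a5 t p1 s y t s) p2 = 1 := by

  rintro t s ⟨ht0, ht1, hte, hs0, hs1, hse, hts⟩ p1 p2
  have hte' : t - eta ≠ 0 := sub_ne_zero.mpr hte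
  have ht1' : t - 1 ≠ 0 := sub_ne_zero.mpr ht1
  have hts' : t - s ≠ 0 := sub_ne_zero.mpr hts
  have hse' : s - eta ≠ 0 := sub_ne_zero.mpr hse
  have hs1' : s - 1 ≠ 0 := sub_ne_zero.mpr hs1
  have hst' : s - t ≠ 0 := sub_ne_zero.mpr (Ne.symm hts)
  have hsum1 : a1 + 2*a2 + a3 + a4 + 2*a5 = 1 := by
    rw [ha0] at hrel; linear_combination hrel
  have hsum2 : a1 + 2*a5 + a3 + a4 + 2*a2 = 1 := by linear_combination hsum1
  refine ⟨?_, ?_, ?_, ?_⟩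
  · have h : (fun y => H1 eta a1 a2 a3 a4 a5 t y s p2 t s)
        = fun y => y + H1 eta a1 a2 a3 a4 a5 t 0 s p2 t s :=
      funext fun y => key1 eta a1 a2 a3 a4 a5 t s p2 y hsum1 ht0 ht1' hte' hts'
    rw [h]
    simpa using ((hasDerivAt_id p1).add_const (H1 eta a1 a2 a3 a4 a5 t 0 s p2 t s)).deriv
  · have h : (fun y => H1 eta a1 a2 a3 a4 a5 t p1 s y t s)
        = fun _ => H1 eta a1 a2 a3 a4 a5 t p1 s 0 t s :=
      funext fun y => key2 eta a1 a2 a3 a4 a5 t s p1 y ht0 ht1' hte' hts'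
    rw [h, deriv_const]
  · have h : (fun y => H2 eta a1 a2 a3 a4 a5 t y s p2 t s)
        = fun _ => H2 eta a1 a2 a3 a4 a5 t 0 s p2 t s := by
      funext y
      simp only [H2]
      exact key2 eta a1 a5 a3 a4 a2 s t p2 y hs0 hs1' hse' hst'
    rw [h, deriv_const]
  · have h : (fun y => H2 eta a1 a2 a3 a4 a5 t p1 s y t s)
        = fun y => y + H2 eta a1 a2 a3 a4 a5 t p1 s 0 t s := by
      funext y
      simp only [H2]
      exact key1 eta a1 a5 a3 a4 a2 s t p1 y hsum2 hs0 hs1' hse' hst'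
    rw [h]
    simpa using ((hasDerivAt_id p2).add_const (H2 eta a1 a2 a3 a4 a5 t p1 s 0 t s)).deriv
end
end
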